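/- Let p > 1, let Γ : ℝⁿ × ℝⁿ × (0,∞) → [0,∞) be measurable satisfying (K1) and the pointwise bound Γ(x,y,t) ≤ D t^{−(n+α)/2} for all x, y ∈ ℝⁿ and t > 0, and let u₀ ∈ L^∞ with u₀ ≥ 0. Then there exists a positive time T such that the integral equation has a unique solution u on ℝⁿ × (0,T) with initial data u₀, and this solution satisfies sup_{0<t<T} ‖u(t)‖_{L^∞} ≤ 2 c_{**} ‖u₀‖_{L^∞}, where c_{**} is a constant depending only on n and α with ‖S(t)φw‖_{L^∞} ≤ c_{**} ‖φ‖_{L^∞} for all t > 0 and φ ∈ L^∞. -/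

import Mathlib

open MeasureTheory Metric Set

/-- Case (A) or case (B) of the paper: the weight is `w(x) = |x₁|^α` with `0 ≤ α < 1`,
or `w(x) = |x|^α` with `0 ≤ α < n`. -/
def CaseAB (n : ℕ) (hn : 0 < n) (α : ℝ) (w : EuclideanSpace ℝ (Fin n) → ℝ) : Prop :=
  (0 ≤ α ∧ α < 1 ∧ ∀ x, w x = |x ⟨0, hn⟩| ^ α) ∨
  (0 ≤ α ∧ (α : ℝ) < n ∧ ∀ x, w x = ‖x‖ ^ α)

/-- The measure `w(x) dx` on `ℝⁿ`. -/
noncomputable def wMeas (n : ℕ) (w : EuclideanSpace ℝ (Fin n) → ℝ) :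
    Measure (EuclideanSpace ℝ (Fin n)) :=
  volume.withDensity fun x => ENNReal.ofReal (w x)

/-- The weak Lorentz norm `‖f‖_{L^{r,∞}(μ)} = sup_{λ>0} λ μ({|f| > λ})^{1/r}` for
`1 < r < ∞`, with `L^{∞,∞}(μ) = L^∞`. -/
noncomputable def weakNorm {X : Type*} [MeasurableSpace X] (μ : Measure X) (f : X → ℝ)
    (r : ENNReal) : ENNReal :=
  if r = ⊤ then eLpNorm f ⊤ μ
  else ⨆ (lam : ℝ) (_ : 0 < lam), ENNReal.ofReal lam * μ {x | lam < |f x|} ^ (1 / r.toReal)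

/-- Property (K1): `∫ Γ(x,y,t) w(x) dx = ∫ Γ(x,y,t) w(y) dy = 1` for all `x, y, t > 0`. -/
def PropK1 {n : ℕ} (w : EuclideanSpace ℝ (Fin n) → ℝ)
    (Γ : EuclideanSpace ℝ (Fin n) → EuclideanSpace ℝ (Fin n) → ℝ → ℝ) : Prop :=
  ∀ (x y : EuclideanSpace ℝ (Fin n)) (t : ℝ), 0 < t →
    (∫⁻ z, ENNReal.ofReal (Γ z y t * w z)) = 1 ∧ (∫⁻ z, ENNReal.ofReal (Γ x z t * w z)) = 1

/-- Property (K2): `Γ(x,y,t) = ∫ Γ(x,ξ,t-s) Γ(ξ,y,s) w(ξ) dξ` for `t > s > 0`. -/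
def PropK2 {n : ℕ} (w : EuclideanSpace ℝ (Fin n) → ℝ)
    (Γ : EuclideanSpace ℝ (Fin n) → EuclideanSpace ℝ (Fin n) → ℝ → ℝ) : Prop :=
  ∀ (x y : EuclideanSpace ℝ (Fin n)) (s t : ℝ), 0 < s → s < t →
    ENNReal.ofReal (Γ x y t) = ∫⁻ ξ, ENNReal.ofReal (Γ x ξ (t - s) * Γ ξ y s * w ξ)

/-- Property (K3): two-sided Gaussian bounds in terms of `w(B(x,√t))`. -/
def PropK3 {n : ℕ} (w : EuclideanSpace ℝ (Fin n) → ℝ)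
    (Γ : EuclideanSpace ℝ (Fin n) → EuclideanSpace ℝ (Fin n) → ℝ → ℝ) : Prop :=
  ∃ cs Cs : ℝ, 0 < cs ∧ cs ≤ Cs ∧
    ∀ (x y : EuclideanSpace ℝ (Fin n)) (t : ℝ), 0 < t →
      cs / (Real.sqrt (∫ z in ball x (Real.sqrt t), w z) *
            Real.sqrt (∫ z in ball y (Real.sqrt t), w z)) *
          Real.exp (-‖x - y‖ ^ 2 / (cs * t)) ≤ Γ x y t ∧
      Γ x y t ≤ Cs / (Real.sqrt (∫ z in ball x (Real.sqrt t), w z) *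
            Real.sqrt (∫ z in ball y (Real.sqrt t), w z)) *
          Real.exp (-‖x - y‖ ^ 2 / (Cs * t))

/-- `u` is a (mild) solution of `∂ₜu - w⁻¹ div(w ∇u) = uᵖ`, `u(·,0) = u₀ ≥ 0`, on
`ℝⁿ × (0,T)`: `u` is nonnegative, measurable, essentially bounded on `ℝⁿ × (0,t)` for all
`t < T`, and for each `0 < t < T` and almost every `x`,
`u(x,t) = ∫ Γ(x,y,t) u₀(y) w(y) dy + ∫₀ᵗ ∫ Γ(x,y,t-s) u(y,s)ᵖ w(y) dy ds < ∞`;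
it is global-in-time if `T = ∞`. -/
def IsSolOn (n : ℕ) (w : EuclideanSpace ℝ (Fin n) → ℝ)
    (Γ : EuclideanSpace ℝ (Fin n) → EuclideanSpace ℝ (Fin n) → ℝ → ℝ) (p : ℝ)
    (u₀ : EuclideanSpace ℝ (Fin n) → ℝ) (u : EuclideanSpace ℝ (Fin n) → ℝ → ℝ)
    (T : ENNReal) : Prop :=
  Measurable (Function.uncurry u) ∧
  (∀ x t, 0 ≤ u x t) ∧
  (∃ M : ℝ, ∀ t : ℝ, 0 < t → ENNReal.ofReal t < T →
    ∀ᵐ x ∂(volume : Measure (EuclideanSpace ℝ (Fin n))), u x t ≤ M) ∧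
  ∀ t : ℝ, 0 < t → ENNReal.ofReal t < T →
    ∀ᵐ x ∂(volume : Measure (EuclideanSpace ℝ (Fin n))),
      ENNReal.ofReal (u x t) =
        (∫⁻ y, ENNReal.ofReal (Γ x y t * u₀ y * w y)) +
        ∫⁻ s in Ioo (0 : ℝ) t, ∫⁻ y, ENNReal.ofReal (Γ x y (t - s) * u y s ^ p * w y)

/-- `[S(t)φw](x) = ∫ Γ(x,y,t) φ(y) w(y) dy`. -/
noncomputable def Sop {n : ℕ} (μ : Measure (EuclideanSpace ℝ (Fin n)))
    (Γ : EuclideanSpace ℝ (Fin n) → EuclideanSpace ℝ (Fin n) → ℝ → ℝ)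
    (φ : EuclideanSpace ℝ (Fin n) → ℝ) (t : ℝ) (x : EuclideanSpace ℝ (Fin n)) : ℝ :=
  ∫ y, Γ x y t * φ y ∂μ

/-!
Starting from `0`, the Picard iterates `uₖ₊₁ = S(t)u₀ + ∫₀ᵗ S(t-s)uₖ(s)ᵖ ds` increase, because
`Γ ≥ 0` and the nonlinearity is monotone; taking them `ℝ≥0∞`-valued, their supremum solves the
equation by monotone convergence. Since `∫ Γ(x,y,t) w(y) dy = 1`, every iterate stays below
`2‖u₀‖∞` as long as `T (2‖u₀‖∞)ᵖ ≤ ‖u₀‖∞`. For uniqueness, if two solutions are bounded by `M`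
then `rᵖ` is `L`-Lipschitz on `[0, M]` with `L = p Mᵖ⁻¹`, and induction on `k` bounds their
difference at time `t` by `M (L t)ᵏ / k!`, which tends to `0`. Testing the bound on `S(t)` with
`φ = 1` gives `c_{**} ≥ 1`, whence `2‖u₀‖∞ ≤ 2 c_{**} ‖u₀‖∞`.
-/

open ENNReal Filter

theorem rpow_le_rpow_add_mul_abs_sub {p M a b : ℝ} (hp : 1 ≤ p) (ha : 0 ≤ a) (hb : 0 ≤ b)
    (haM : a ≤ M) : a ^ p ≤ b ^ p + p * M ^ (p - 1) * |a - b| := by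
  rcases le_total a b with hab | hba
  · have hpow : a ^ p ≤ b ^ p := Real.rpow_le_rpow ha hab (by linarith)
    have := Real.rpow_nonneg (ha.trans haM) (p - 1)
    have : 0 ≤ p * M ^ (p - 1) * |a - b| := by positivity
    linarith
  · have hderiv : ∀ x ∈ interior (Icc 0 M), deriv (fun x : ℝ => x ^ p) x ≤ p * M ^ (p - 1) := by
      intro x hx
      rw [interior_Icc] at hx
      rw [Real.deriv_rpow_const]
      gcongr <;> linarith [hx.1, hx.2]
    have := (convex_Icc 0 M).image_sub_le_mul_sub_of_deriv_le
      (Real.continuous_rpow_const (by linarith)).continuousOn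
      (Real.differentiable_rpow_const hp).differentiableOn hderiv
      b ⟨hb, hba.trans haM⟩ a ⟨ha, haM⟩ hba
    rw [abs_of_nonneg (sub_nonneg.2 hba)]
    linarith

theorem ofReal_rpow_le_ofReal_rpow_add {p M a b e : ℝ} (hp : 1 ≤ p) (ha : 0 ≤ a) (hb : 0 ≤ b)
    (haM : a ≤ M) (hab : |a - b| ≤ e) :
    ENNReal.ofReal a ^ p ≤ ENNReal.ofReal b ^ p + ENNReal.ofReal (p * M ^ (p - 1) * e) := by
  have hL : 0 ≤ p * M ^ (p - 1) := by
    have := Real.rpow_nonneg (ha.trans haM) (p - 1); positivity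
  rw [ofReal_rpow_of_nonneg ha (by linarith), ofReal_rpow_of_nonneg hb (by linarith)]
  refine (ofReal_le_ofReal ?_).trans ofReal_add_le
  linarith [rpow_le_rpow_add_mul_abs_sub hp ha hb haM, mul_le_mul_of_nonneg_left hab hL]

open scoped Nat in
theorem lintegral_Ioo_ofReal_mul_pow_div_factorial {L M t : ℝ} (hL : 0 ≤ L) (hM : 0 ≤ M)
    (ht : 0 ≤ t) (k : ℕ) :
    ∫⁻ s in Ioo 0 t, ENNReal.ofReal (L * (M * (L * s) ^ k / k !)) =
      ENNReal.ofReal (M * (L * t) ^ (k + 1) / (k + 1)!) := by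
  have hderiv : ∀ s, HasDerivAt (fun s => M * (L * s) ^ (k + 1) / (k + 1)!)
      (L * (M * (L * s) ^ k / k !)) s := by
    intro s
    refine ((((hasDerivAt_id s).const_mul L).pow (k + 1)).const_mul M |>.div_const
      ((k + 1)! : ℝ)).congr_deriv ?_
    rw [Nat.factorial_succ, id]
    push_cast
    field_simp
  have hint : ∫ s in 0..t, L * (M * (L * s) ^ k / k !) = M * (L * t) ^ (k + 1) / (k + 1)! := by
    rw [intervalIntegral.integral_eq_sub_of_hasDerivAt (fun s _ => hderiv s)
      (by apply Continuous.intervalIntegrable; fun_prop)]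
    simp
  rw [← hint, intervalIntegral.integral_of_le ht, integral_Ioc_eq_integral_Ioo,
    ofReal_integral_eq_lintegral_ofReal]
  · exact (Continuous.integrableOn_Icc (by fun_prop)).mono_set Ioo_subset_Icc_self
  · exact (ae_restrict_iff' measurableSet_Ioo).2 (ae_of_all _ fun s hs => by
      have := hs.1.le; positivity)

namespace DuhamelEquation

open scoped Nat

variable {X : Type*} [MeasurableSpace X] {μ : Measure X} {K : X → X → ℝ → ℝ≥0∞} {p : ℝ}

structure IsStochasticKernel (μ : Measure X) (K : X → X → ℝ → ℝ≥0∞) : Prop where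
  measurable : Measurable fun q : X × X × ℝ => K q.1 q.2.1 q.2.2
  lintegral_eq_one : ∀ x t, 0 < t → ∫⁻ y, K x y t ∂μ = 1

theorem IsStochasticKernel.measurable_section (hK : IsStochasticKernel μ K) (x : X) (t : ℝ) :
    Measurable fun y => K x y t :=
  hK.measurable.comp (measurable_const.prodMk (measurable_id.prodMk measurable_const))

theorem IsStochasticKernel.lintegral_mul_le_eLpNorm_top (hK : IsStochasticKernel μ K)
    (f : X → ℝ) (x : X) {t : ℝ} (ht : 0 < t) :
    ∫⁻ y, K x y t * ENNReal.ofReal (f y) ∂μ ≤ eLpNorm f ⊤ μ := by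
  calc ∫⁻ y, K x y t * ENNReal.ofReal (f y) ∂μ ≤ ∫⁻ y, K x y t * eLpNorm f ⊤ μ ∂μ := by
        refine lintegral_mono_ae ((ae_le_eLpNormEssSup (f := f)).mono fun y hy => ?_)
        rw [eLpNorm_exponent_top]
        gcongr
        exact (Real.ofReal_le_enorm _).trans hy
    _ = eLpNorm f ⊤ μ := by
        rw [lintegral_mul_const _ (hK.measurable_section x t), hK.lintegral_eq_one x t ht, one_mul]

theorem IsStochasticKernel.measurable_lintegral_mul (hK : IsStochasticKernel μ K) [SFinite μ]
    {f : X → ℝ} (hf : Measurable f) :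
    Measurable (Function.uncurry fun x t => ∫⁻ y, K x y t * ENNReal.ofReal (f y) ∂μ) :=
  Measurable.lintegral_prod_right'
    (f := fun q : (X × ℝ) × X => K q.1.1 q.2 q.1.2 * ENNReal.ofReal (f q.2))
    ((hK.measurable.comp (f := fun q : (X × ℝ) × X => (q.1.1, q.2, q.1.2)) (by fun_prop)).mul
      (hf.comp measurable_snd).ennreal_ofReal)

noncomputable def duhamel (μ : Measure X) (K : X → X → ℝ → ℝ≥0∞) (p : ℝ)
    (v : X → ℝ → ℝ≥0∞) (x : X) (t : ℝ) : ℝ≥0∞ :=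
  ∫⁻ s in Ioo 0 t, ∫⁻ y, K x y (t - s) * v y s ^ p ∂μ

theorem measurable_duhamel_integrand (hK : IsStochasticKernel μ K) [SFinite μ]
    {v : X → ℝ → ℝ≥0∞} (hv : Measurable (Function.uncurry v)) :
    Measurable fun q : (X × ℝ) × ℝ => ∫⁻ y, K q.1.1 y (q.1.2 - q.2) * v y q.2 ^ p ∂μ := by
  refine Measurable.lintegral_prod_right' (f := fun q : ((X × ℝ) × ℝ) × X =>
    K q.1.1.1 q.2 (q.1.1.2 - q.1.2) * v q.2 q.1.2 ^ p) ?_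
  have h1 := hK.measurable.comp
    (f := fun q : ((X × ℝ) × ℝ) × X => (q.1.1.1, q.2, q.1.1.2 - q.1.2)) (by fun_prop)
  have h2 := hv.comp (f := fun q : ((X × ℝ) × ℝ) × X => (q.2, q.1.2)) (by fun_prop)
  exact h1.mul (h2.pow_const p)

theorem measurable_duhamel (hK : IsStochasticKernel μ K) [SFinite μ]
    {v : X → ℝ → ℝ≥0∞} (hv : Measurable (Function.uncurry v)) :
    Measurable (Function.uncurry (duhamel μ K p v)) := by
  have hset : MeasurableSet {q : (X × ℝ) × ℝ | q.2 ∈ Ioo 0 q.1.2} :=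
    (measurableSet_lt measurable_const measurable_snd).inter
      (measurableSet_lt measurable_snd (measurable_snd.comp measurable_fst))
  change Measurable fun q : X × ℝ => duhamel μ K p v q.1 q.2
  simp_rw [duhamel, ← lintegral_indicator measurableSet_Ioo]
  exact ((measurable_duhamel_integrand hK hv).indicator hset).lintegral_prod_right'

theorem duhamel_mono (hp : 0 ≤ p) {v v' : X → ℝ → ℝ≥0∞} (h : ∀ y s, v y s ≤ v' y s)
    (x : X) (t : ℝ) : duhamel μ K p v x t ≤ duhamel μ K p v' x t :=
  lintegral_mono fun s => lintegral_mono fun y => by gcongr; exact h y s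

theorem duhamel_congr {v v' : X → ℝ → ℝ≥0∞} {t : ℝ} (h : ∀ y, ∀ s ∈ Ioo 0 t, v y s = v' y s)
    (x : X) : duhamel μ K p v x t = duhamel μ K p v' x t :=
  setLIntegral_congr_fun measurableSet_Ioo fun s hs => by simp only [h _ s hs]

theorem duhamel_le_add (hK : IsStochasticKernel μ K) {v v' : X → ℝ → ℝ≥0∞} {g : ℝ → ℝ≥0∞}
    {t : ℝ} (hg : Measurable g) (h : ∀ s ∈ Ioo 0 t, ∀ᵐ y ∂μ, v y s ^ p ≤ v' y s ^ p + g s)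
    (x : X) : duhamel μ K p v x t ≤ duhamel μ K p v' x t + ∫⁻ s in Ioo 0 t, g s := by
  calc duhamel μ K p v x t
      ≤ ∫⁻ s in Ioo 0 t, ∫⁻ y, K x y (t - s) * v' y s ^ p + K x y (t - s) * g s ∂μ :=
        setLIntegral_mono' measurableSet_Ioo fun s hs => lintegral_mono_ae <| (h s hs).mono
          fun y hy => by rw [← mul_add]; gcongr
    _ = ∫⁻ s in Ioo 0 t, (∫⁻ y, K x y (t - s) * v' y s ^ p ∂μ) + g s := by
        refine setLIntegral_congr_fun measurableSet_Ioo fun s hs => ?_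
        rw [lintegral_add_right' _ ((hK.measurable_section x _).mul_const _).aemeasurable,
          lintegral_mul_const _ (hK.measurable_section x _),
          hK.lintegral_eq_one x _ (sub_pos.2 hs.2), one_mul]
    _ = duhamel μ K p v' x t + ∫⁻ s in Ioo 0 t, g s := lintegral_add_right _ hg

theorem duhamel_le (hK : IsStochasticKernel μ K) (hp : 0 ≤ p) {v : X → ℝ → ℝ≥0∞} {C : ℝ≥0∞}
    {t : ℝ} (hv : ∀ y, ∀ s ∈ Ioo 0 t, v y s ≤ C) (x : X) :
    duhamel μ K p v x t ≤ ENNReal.ofReal t * C ^ p := by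
  calc duhamel μ K p v x t ≤ ∫⁻ s in Ioo 0 t, ∫⁻ y, K x y (t - s) * C ^ p ∂μ :=
        setLIntegral_mono' measurableSet_Ioo fun s hs =>
          lintegral_mono fun y => by gcongr; exact hv y s hs
    _ = ∫⁻ _ in Ioo 0 t, C ^ p := by
        refine setLIntegral_congr_fun measurableSet_Ioo fun s hs => ?_
        rw [lintegral_mul_const _ (hK.measurable_section x _),
          hK.lintegral_eq_one x _ (sub_pos.2 hs.2), one_mul]
    _ = ENNReal.ofReal t * C ^ p := by
        rw [setLIntegral_const, Real.volume_Ioo, sub_zero, mul_comm]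

theorem duhamel_iSup (hK : IsStochasticKernel μ K) [SFinite μ] (hp : 0 < p)
    {v : ℕ → X → ℝ → ℝ≥0∞} (hv : ∀ k, Measurable (Function.uncurry (v k)))
    (hmono : ∀ y s, Monotone fun k => v k y s) (x : X) (t : ℝ) :
    duhamel μ K p (fun y s => ⨆ k, v k y s) x t = ⨆ k, duhamel μ K p (v k) x t := by
  have hpow : ∀ y s, (⨆ k, v k y s) ^ p = ⨆ k, v k y s ^ p := fun y s =>
    Monotone.map_iSup_of_continuousAt ENNReal.continuous_rpow_const.continuousAt
      (ENNReal.monotone_rpow_of_nonneg hp.le) (ENNReal.zero_rpow_of_pos hp)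
  have hmono' : ∀ y s, Monotone fun k => v k y s ^ p := fun y s i j hij =>
    ENNReal.rpow_le_rpow (hmono y s hij) hp.le
  simp_rw [duhamel, hpow, ENNReal.mul_iSup]
  rw [← lintegral_iSup]
  · congr 1 with s
    exact lintegral_iSup (fun k => (hK.measurable_section x _).mul
      (((hv k).comp (measurable_id.prodMk measurable_const)).pow_const p))
      fun i j hij y => mul_le_mul_right (hmono' y s hij) _
  · exact fun k => (measurable_duhamel_integrand hK (hv k)).comp
      ((measurable_const.prodMk measurable_const).prodMk measurable_id)
  · exact fun i j hij s => lintegral_mono fun y => mul_le_mul_right (hmono' y s hij) _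

noncomputable def picard (μ : Measure X) (K : X → X → ℝ → ℝ≥0∞) (p : ℝ) (F : X → ℝ → ℝ≥0∞) :
    ℕ → X → ℝ → ℝ≥0∞
  | 0 => fun _ _ => 0
  | k + 1 => fun x t => F x t + duhamel μ K p (picard μ K p F k) x t

variable {F : X → ℝ → ℝ≥0∞}

theorem monotone_picard (hp : 0 ≤ p) (x : X) (t : ℝ) :
    Monotone fun k => picard μ K p F k x t := by
  refine monotone_nat_of_le_succ fun k => ?_
  induction k generalizing x t with
  | zero => exact zero_le
  | succ k ih => exact add_le_add_right (duhamel_mono hp (fun y s => ih y s) x t) _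

theorem measurable_picard (hK : IsStochasticKernel μ K) [SFinite μ]
    (hF : Measurable (Function.uncurry F)) (k : ℕ) :
    Measurable (Function.uncurry (picard μ K p F k)) := by
  induction k with
  | zero => exact measurable_const
  | succ k ih => exact hF.add (measurable_duhamel hK ih)

theorem picard_le (hK : IsStochasticKernel μ K) (hp : 0 ≤ p) {N : ℝ≥0∞} {T : ℝ}
    (hFN : ∀ x, ∀ t ∈ Ioo 0 T, F x t ≤ N) (hT : ENNReal.ofReal T * (2 * N) ^ p ≤ N) (k : ℕ) :
    ∀ x, ∀ t ∈ Ioo 0 T, picard μ K p F k x t ≤ 2 * N := by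
  induction k with
  | zero => exact fun _ _ _ => zero_le
  | succ k ih =>
    intro x t ht
    have hduh : duhamel μ K p (picard μ K p F k) x t ≤ N :=
      calc duhamel μ K p (picard μ K p F k) x t ≤ ENNReal.ofReal t * (2 * N) ^ p :=
            duhamel_le hK hp (fun y s hs => ih y s ⟨hs.1, hs.2.trans ht.2⟩) x
        _ ≤ N := le_trans (by gcongr; exact ht.2.le) hT
    rw [two_mul]
    exact add_le_add (hFN x t ht) hduh

theorem iSup_picard_eq (hK : IsStochasticKernel μ K) [SFinite μ] (hp : 0 < p)
    (hF : Measurable (Function.uncurry F)) (x : X) (t : ℝ) :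
    ⨆ k, picard μ K p F k x t =
      F x t + duhamel μ K p (fun y s => ⨆ k, picard μ K p F k y s) x t := by
  rw [duhamel_iSup hK hp (measurable_picard hK hF) (monotone_picard hp.le), ENNReal.add_iSup,
    ← (monotone_picard hp.le x t).iSup_nat_add 1]
  rfl

structure IsMildSolution (μ : Measure X) (K : X → X → ℝ → ℝ≥0∞) (p : ℝ) (F : X → ℝ → ℝ≥0∞)
    (T M : ℝ) (u : X → ℝ → ℝ) : Prop where
  nonneg : ∀ x t, 0 ≤ u x t
  ae_le : ∀ t ∈ Ioo 0 T, ∀ᵐ x ∂μ, u x t ≤ M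
  ae_integral_eq : ∀ t ∈ Ioo 0 T, ∀ᵐ x ∂μ,
    ENNReal.ofReal (u x t) = F x t + duhamel μ K p (fun y s => ENNReal.ofReal (u y s)) x t

theorem exists_isMildSolution (hK : IsStochasticKernel μ K) [SFinite μ] (hp : 0 < p)
    (hF : Measurable (Function.uncurry F)) {N : ℝ≥0∞} (hN : N ≠ ⊤) {T : ℝ}
    (hFN : ∀ x, ∀ t ∈ Ioo 0 T, F x t ≤ N) (hT : ENNReal.ofReal T * (2 * N) ^ p ≤ N) :
    ∃ u : X → ℝ → ℝ, Measurable (Function.uncurry u) ∧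
      IsMildSolution μ K p F T (2 * N).toReal u := by
  set U : X → ℝ → ℝ≥0∞ := fun x t => ⨆ k, picard μ K p F k x t
  have hUN : ∀ x, ∀ t ∈ Ioo 0 T, U x t ≤ 2 * N := fun x t ht =>
    iSup_le fun k => picard_le hK hp.le hFN hT k x t ht
  have h2N : 2 * N ≠ ⊤ := mul_ne_top ofNat_ne_top hN
  have hU : ∀ x, ∀ t ∈ Ioo 0 T, ENNReal.ofReal (U x t).toReal = U x t := fun x t ht =>
    ofReal_toReal ((hUN x t ht).trans_lt h2N.lt_top).ne
  refine ⟨fun x t => (U x t).toReal,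
    (Measurable.iSup fun k => measurable_picard hK hF k).ennreal_toReal,
    ⟨fun _ _ => toReal_nonneg, fun t ht => ae_of_all _ fun x => toReal_mono h2N (hUN x t ht),
    fun t ht => ae_of_all _ fun x => ?_⟩⟩
  rw [hU x t ht]
  refine (iSup_picard_eq hK hp hF x t).trans (congrArg (F x t + ·) ?_)
  exact duhamel_congr (fun y s hs => (hU y s ⟨hs.1, hs.2.trans ht.2⟩).symm) x

theorem exists_pos_ofReal_mul_rpow_le {N : ℝ≥0∞} (hN : N ≠ ⊤) (hp : 0 < p) :
    ∃ T : ℝ, 0 < T ∧ ENNReal.ofReal T * (2 * N) ^ p ≤ N := by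
  rcases eq_or_ne N 0 with rfl | hN0
  · exact ⟨1, one_pos, by simp [ENNReal.zero_rpow_of_pos hp]⟩
  have hpos : (2 * N) ^ p ≠ 0 := (ENNReal.rpow_pos (by positivity) (by finiteness)).ne'
  have hfin : (2 * N) ^ p ≠ ⊤ := ENNReal.rpow_ne_top_of_nonneg hp.le (by finiteness)
  refine ⟨(N / (2 * N) ^ p).toReal,
    toReal_pos (ENNReal.div_pos hN0 hfin).ne' (ENNReal.div_ne_top hN hpos), ?_⟩
  rw [ofReal_toReal (ENNReal.div_ne_top hN hpos), ENNReal.div_mul_cancel hpos hfin]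

namespace IsMildSolution

variable {T M : ℝ} {a b : X → ℝ → ℝ}

theorem mono (ha : IsMildSolution μ K p F T M a) {M' : ℝ} (hM : M ≤ M') :
    IsMildSolution μ K p F T M' a :=
  ⟨ha.nonneg, fun t ht => (ha.ae_le t ht).mono fun _ hx => hx.trans hM, ha.ae_integral_eq⟩

theorem ae_le_add_of_ae_abs_sub_le (hK : IsStochasticKernel μ K) (hp : 1 ≤ p) (hM : 0 ≤ M)
    (ha : IsMildSolution μ K p F T M a) (hb : IsMildSolution μ K p F T M b) {k : ℕ}
    (hab : ∀ s ∈ Ioo 0 T, ∀ᵐ y ∂μ, |a y s - b y s| ≤ M * (p * M ^ (p - 1) * s) ^ k / k !)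
    {t : ℝ} (ht : t ∈ Ioo 0 T) :
    ∀ᵐ x ∂μ, a x t ≤ b x t + M * (p * M ^ (p - 1) * t) ^ (k + 1) / (k + 1)! := by
  set L := p * M ^ (p - 1)
  have hL : 0 ≤ L := by have := Real.rpow_nonneg hM (p - 1); positivity
  have hpow : ∀ s ∈ Ioo 0 t, ∀ᵐ y ∂μ, ENNReal.ofReal (a y s) ^ p ≤
      ENNReal.ofReal (b y s) ^ p + ENNReal.ofReal (L * (M * (L * s) ^ k / k !)) := by
    intro s hs
    have hsT : s ∈ Ioo 0 T := ⟨hs.1, hs.2.trans ht.2⟩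
    filter_upwards [ha.ae_le s hsT, hab s hsT] with y hyM hy
    exact ofReal_rpow_le_ofReal_rpow_add hp (ha.nonneg y s) (hb.nonneg y s) hyM hy
  have herr : 0 ≤ M * (L * t) ^ (k + 1) / (k + 1)! := by have := ht.1.le; positivity
  filter_upwards [ha.ae_integral_eq t ht, hb.ae_integral_eq t ht] with x hax hbx
  rw [← ofReal_le_ofReal_iff (add_nonneg (hb.nonneg x t) herr), ofReal_add (hb.nonneg x t) herr,
    hax, hbx, add_assoc, ← lintegral_Ioo_ofReal_mul_pow_div_factorial hL hM ht.1.le]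
  gcongr
  exact duhamel_le_add hK (by fun_prop) hpow x

theorem ae_abs_sub_le (hK : IsStochasticKernel μ K) (hp : 1 ≤ p) (hM : 0 ≤ M)
    (ha : IsMildSolution μ K p F T M a) (hb : IsMildSolution μ K p F T M b) (k : ℕ) :
    ∀ t ∈ Ioo 0 T, ∀ᵐ x ∂μ, |a x t - b x t| ≤ M * (p * M ^ (p - 1) * t) ^ k / k ! := by
  induction k with
  | zero =>
    intro t ht
    filter_upwards [ha.ae_le t ht, hb.ae_le t ht] with x hax hbx
    have := ha.nonneg x t
    have := hb.nonneg x t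
    simp only [pow_zero, Nat.factorial_zero, Nat.cast_one, mul_one, div_one, abs_le]
    constructor <;> linarith
  | succ k ih =>
    intro t ht
    have ih' : ∀ s ∈ Ioo 0 T, ∀ᵐ y ∂μ, |b y s - a y s| ≤ M * (p * M ^ (p - 1) * s) ^ k / k ! :=
      fun s hs => (ih s hs).mono fun y hy => by rwa [abs_sub_comm]
    filter_upwards [ha.ae_le_add_of_ae_abs_sub_le hK hp hM hb ih ht,
      hb.ae_le_add_of_ae_abs_sub_le hK hp hM ha ih' ht] with x hab hba
    rw [abs_sub_le_iff]
    constructor <;> linarith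

theorem ae_eq_of_bound (hK : IsStochasticKernel μ K) (hp : 1 ≤ p) (hM : 0 ≤ M)
    (ha : IsMildSolution μ K p F T M a) (hb : IsMildSolution μ K p F T M b) {t : ℝ}
    (ht : t ∈ Ioo 0 T) : (fun x => a x t) =ᵐ[μ] fun x => b x t := by
  have hlim : Tendsto (fun k : ℕ => M * (p * M ^ (p - 1) * t) ^ k / k !) atTop (nhds 0) := by
    simpa [mul_div_assoc] using
      (FloorSemiring.tendsto_pow_div_factorial_atTop (p * M ^ (p - 1) * t)).const_mul M
  filter_upwards [ae_all_iff.2 fun k => ha.ae_abs_sub_le hK hp hM hb k t ht] with x hx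
  exact sub_eq_zero.1 (abs_nonpos_iff.1 (ge_of_tendsto' hlim hx))

theorem ae_eq {Ma Mb : ℝ} (hK : IsStochasticKernel μ K) (hp : 1 ≤ p)
    (ha : IsMildSolution μ K p F T Ma a) (hb : IsMildSolution μ K p F T Mb b) {t : ℝ}
    (ht : t ∈ Ioo 0 T) : (fun x => a x t) =ᵐ[μ] fun x => b x t :=
  (ha.mono ((le_max_left _ _).trans (le_max_left _ (0 : ℝ)))).ae_eq_of_bound hK hp
    (le_max_right _ _) (hb.mono ((le_max_right _ _).trans (le_max_left _ _))) ht

theorem eLpNorm_top_le (ha : IsMildSolution μ K p F T M a) {t : ℝ} (ht : t ∈ Ioo 0 T) :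
    eLpNorm (fun x => a x t) ⊤ μ ≤ ENNReal.ofReal M := by
  rw [eLpNorm_exponent_top]
  exact eLpNormEssSup_le_of_ae_bound ((ha.ae_le t ht).mono fun x hx => by
    rwa [Real.norm_of_nonneg (ha.nonneg x t)])

end IsMildSolution

end DuhamelEquation

section Euclidean

variable {n : ℕ} {w : EuclideanSpace ℝ (Fin n) → ℝ}
  {Γ : EuclideanSpace ℝ (Fin n) → EuclideanSpace ℝ (Fin n) → ℝ → ℝ}

theorem CaseAB.nonneg {hn : 0 < n} {α : ℝ} (hw : CaseAB n hn α w)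
    (x : EuclideanSpace ℝ (Fin n)) : 0 ≤ w x := by
  rcases hw with ⟨-, -, hw⟩ | ⟨-, -, hw⟩ <;> rw [hw] <;> positivity

theorem CaseAB.measurable {hn : 0 < n} {α : ℝ} (hw : CaseAB n hn α w) : Measurable w := by
  rcases hw with ⟨-, -, hw⟩ | ⟨-, -, hw⟩ <;> rw [funext hw] <;> fun_prop

theorem isSolOn_iff {p : ℝ} {u₀ : EuclideanSpace ℝ (Fin n) → ℝ}
    {u : EuclideanSpace ℝ (Fin n) → ℝ → ℝ} {T : ℝ} (hT : 0 < T) (hp : 0 ≤ p)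
    (hΓ0 : ∀ x y t, 0 ≤ Γ x y t) (hw0 : ∀ x, 0 ≤ w x) :
    IsSolOn n w Γ p u₀ u (ENNReal.ofReal T) ↔ Measurable (Function.uncurry u) ∧
      ∃ M, DuhamelEquation.IsMildSolution volume (fun x y t => ENNReal.ofReal (Γ x y t * w y)) p
        (fun x t => ∫⁻ y, ENNReal.ofReal (Γ x y t * w y) * ENNReal.ofReal (u₀ y)) T M u := by
  have hlin : ∀ x t, ∫⁻ y, ENNReal.ofReal (Γ x y t * u₀ y * w y) =
      ∫⁻ y, ENNReal.ofReal (Γ x y t * w y) * ENNReal.ofReal (u₀ y) := fun x t =>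
    lintegral_congr fun y => by
      rw [mul_right_comm, ENNReal.ofReal_mul (mul_nonneg (hΓ0 x y t) (hw0 y))]
  have hduh : (∀ x t, 0 ≤ u x t) → ∀ x t,
      ∫⁻ s in Ioo 0 t, ∫⁻ y, ENNReal.ofReal (Γ x y (t - s) * u y s ^ p * w y) =
        DuhamelEquation.duhamel volume (fun x y t => ENNReal.ofReal (Γ x y t * w y)) p
          (fun y s => ENNReal.ofReal (u y s)) x t := fun hu x t =>
    lintegral_congr fun s => lintegral_congr fun y => by
      rw [mul_right_comm, ENNReal.ofReal_mul (mul_nonneg (hΓ0 x y _) (hw0 y)),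
        ENNReal.ofReal_rpow_of_nonneg (hu y s) hp]
  simp only [IsSolOn, ENNReal.ofReal_lt_ofReal_iff hT, hlin]
  constructor
  · rintro ⟨hm, hu, ⟨M, hM⟩, heq⟩
    exact ⟨hm, M, hu, fun t ht => hM t ht.1 ht.2, fun t ht => by
      simpa only [hduh hu] using heq t ht.1 ht.2⟩
  · rintro ⟨hm, M, hu⟩
    exact ⟨hm, hu.nonneg, ⟨M, fun t h0 hT => hu.ae_le t ⟨h0, hT⟩⟩, fun t h0 hT => by
      simpa only [hduh hu.nonneg] using hu.ae_integral_eq t ⟨h0, hT⟩⟩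

theorem Sop_wMeas_const_one
    (hΓ : Measurable fun q : EuclideanSpace ℝ (Fin n) × EuclideanSpace ℝ (Fin n) × ℝ =>
      Γ q.1 q.2.1 q.2.2)
    (hΓ0 : ∀ x y t, 0 ≤ Γ x y t) (hw0 : ∀ x, 0 ≤ w x) (hw : Measurable w) {t : ℝ}
    (h1 : ∀ x, ∫⁻ y, ENNReal.ofReal (Γ x y t * w y) = 1) :
    Sop (wMeas n w) Γ (fun _ => 1) t = fun _ => 1 := by
  funext x
  have hg : Measurable fun y => Γ x y t :=
    hΓ.comp (measurable_const.prodMk (measurable_id.prodMk measurable_const))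
  simp only [Sop, mul_one]
  rw [integral_eq_lintegral_of_nonneg_ae (ae_of_all _ (hΓ0 x · t)) hg.aestronglyMeasurable, wMeas,
    lintegral_withDensity_eq_lintegral_mul _ hw.ennreal_ofReal hg.ennreal_ofReal]
  simp_rw [Pi.mul_apply, ← ENNReal.ofReal_mul (hw0 _), mul_comm (w _), h1, ENNReal.toReal_one]

theorem one_le_of_eLpNorm_Sop_le
    (hΓ : Measurable fun q : EuclideanSpace ℝ (Fin n) × EuclideanSpace ℝ (Fin n) × ℝ =>
      Γ q.1 q.2.1 q.2.2)
    (hΓ0 : ∀ x y t, 0 ≤ Γ x y t) (hw0 : ∀ x, 0 ≤ w x) (hw : Measurable w) {t c : ℝ}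
    (h1 : ∀ x, ∫⁻ y, ENNReal.ofReal (Γ x y t * w y) = 1)
    (hS : eLpNorm (Sop (wMeas n w) Γ (fun _ => 1) t) ⊤ volume ≤
      ENNReal.ofReal c * eLpNorm (fun _ : EuclideanSpace ℝ (Fin n) => (1 : ℝ)) ⊤ volume) :
    1 ≤ c := by
  rw [Sop_wMeas_const_one hΓ hΓ0 hw0 hw h1, eLpNorm_exponent_top,
    eLpNormEssSup_const _ (NeZero.ne (volume : Measure (EuclideanSpace ℝ (Fin n))))] at hS
  simpa using hS

end Euclidean

open DuhamelEquation in
theorem stmt_19_general (n : ℕ) (hn : 0 < n) (α : ℝ) (w : EuclideanSpace ℝ (Fin n) → ℝ)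
    (hw : CaseAB n hn α w) (p : ℝ) (hp : 1 < p)
    (Γ : EuclideanSpace ℝ (Fin n) → EuclideanSpace ℝ (Fin n) → ℝ → ℝ)
    (hmeas : Measurable (fun q : (EuclideanSpace ℝ (Fin n)) × (EuclideanSpace ℝ (Fin n)) × ℝ =>
      Γ q.1 q.2.1 q.2.2))
    (hΓ0 : ∀ x y t, 0 ≤ Γ x y t) (hK1 : PropK1 w Γ)
    (cσ : ℝ)
    (hS : ∀ φ : EuclideanSpace ℝ (Fin n) → ℝ, Measurable φ →
      MemLp φ ⊤ (volume : Measure (EuclideanSpace ℝ (Fin n))) →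
      ∀ t : ℝ, 0 < t →
        eLpNorm (Sop (wMeas n w) Γ φ t) ⊤ (volume : Measure (EuclideanSpace ℝ (Fin n))) ≤
          ENNReal.ofReal cσ * eLpNorm φ ⊤ (volume : Measure (EuclideanSpace ℝ (Fin n)))) :
    ∀ u₀ : EuclideanSpace ℝ (Fin n) → ℝ, Measurable u₀ → (∀ x, 0 ≤ u₀ x) →
      MemLp u₀ ⊤ (volume : Measure (EuclideanSpace ℝ (Fin n))) →
      ∃ T : ℝ, 0 < T ∧
        ∃ u : EuclideanSpace ℝ (Fin n) → ℝ → ℝ,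
          IsSolOn n w Γ p u₀ u (ENNReal.ofReal T) ∧
          (∀ v : EuclideanSpace ℝ (Fin n) → ℝ → ℝ,
            IsSolOn n w Γ p u₀ v (ENNReal.ofReal T) →
            ∀ t : ℝ, 0 < t → t < T →
              (fun x => v x t) =ᵐ[(volume : Measure (EuclideanSpace ℝ (Fin n)))]
                fun x => u x t) ∧
          ∀ t : ℝ, 0 < t → t < T →
            eLpNorm (fun x => u x t) ⊤ (volume : Measure (EuclideanSpace ℝ (Fin n))) ≤
              ENNReal.ofReal (2 * cσ) *
                eLpNorm u₀ ⊤ (volume : Measure (EuclideanSpace ℝ (Fin n))) := by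
  intro u₀ hu₀ _ hu₀L
  -- the weight is absorbed into the kernel, which then integrates to `1` against Lebesgue measure
  set K : EuclideanSpace ℝ (Fin n) → EuclideanSpace ℝ (Fin n) → ℝ → ℝ≥0∞ :=
    fun x y t => ENNReal.ofReal (Γ x y t * w y)
  have hK : IsStochasticKernel volume K :=
    ⟨(hmeas.mul (hw.measurable.comp (by fun_prop))).ennreal_ofReal,
      fun x t ht => (hK1 x x t ht).2⟩
  have hcσ : 1 ≤ cσ := one_le_of_eLpNorm_Sop_le hmeas hΓ0 hw.nonneg hw.measurable
    (fun x => (hK1 x x 1 one_pos).2) (hS _ measurable_const (memLp_top_const 1) 1 one_pos)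
  set N := eLpNorm u₀ ⊤ volume
  obtain ⟨T, hT, hTN⟩ := exists_pos_ofReal_mul_rpow_le hu₀L.eLpNorm_ne_top (by linarith : 0 < p)
  obtain ⟨u, hum, hu⟩ := exists_isMildSolution hK (by linarith) (hK.measurable_lintegral_mul hu₀)
    hu₀L.eLpNorm_ne_top (fun x t ht => hK.lintegral_mul_le_eLpNorm_top u₀ x ht.1) hTN
  refine ⟨T, hT, u, (isSolOn_iff hT (by linarith) hΓ0 hw.nonneg).2 ⟨hum, _, hu⟩,
    fun v hv t ht htT => ?_, fun t ht htT => ?_⟩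
  · obtain ⟨-, M, hv⟩ := (isSolOn_iff hT (by linarith) hΓ0 hw.nonneg).1 hv
    exact hv.ae_eq hK hp.le hu ⟨ht, htT⟩
  · calc eLpNorm (fun x => u x t) ⊤ volume ≤ ENNReal.ofReal (2 * N).toReal :=
          hu.eLpNorm_top_le ⟨ht, htT⟩
      _ = 2 * N := ofReal_toReal (mul_ne_top ofNat_ne_top hu₀L.eLpNorm_ne_top)
      _ ≤ ENNReal.ofReal (2 * cσ) * N := by
          gcongr
          rw [← ofReal_ofNat]
          exact ofReal_le_ofReal (by linarith)

/-- Lemma 4.2: in case (A) or (B), with `p > 1`, measurable `Γ ≥ 0` satisfying (K1) and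
`Γ(x,y,t) ≤ D t^{-(n+α)/2}`, and a constant `c_{**} > 0` with
`‖S(t)φw‖_∞ ≤ c_{**} ‖φ‖_∞` for all bounded measurable `φ` and `t > 0`, for every
bounded nonnegative measurable `u₀` there is `T > 0` such that the integral equation has
a unique solution `u` on `ℝⁿ × (0,T)` with initial data `u₀`, satisfying
`sup_{0<t<T} ‖u(t)‖_∞ ≤ 2 c_{**} ‖u₀‖_∞`. -/
theorem stmt_19 (n : ℕ) (hn : 0 < n) (α : ℝ) (w : EuclideanSpace ℝ (Fin n) → ℝ)
    (hw : CaseAB n hn α w) (p : ℝ) (hp : 1 < p)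
    (Γ : EuclideanSpace ℝ (Fin n) → EuclideanSpace ℝ (Fin n) → ℝ → ℝ)
    (hmeas : Measurable (fun q : (EuclideanSpace ℝ (Fin n)) × (EuclideanSpace ℝ (Fin n)) × ℝ =>
      Γ q.1 q.2.1 q.2.2))
    (hΓ0 : ∀ x y t, 0 ≤ Γ x y t) (hK1 : PropK1 w Γ)
    (D : ℝ) (hD : 0 < D)
    (hΓD : ∀ (x y : EuclideanSpace ℝ (Fin n)) (t : ℝ), 0 < t →
      Γ x y t ≤ D * t ^ (-((n : ℝ) + α) / 2))
    (cσ : ℝ) (hcσ : 0 < cσ)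
    (hS : ∀ φ : EuclideanSpace ℝ (Fin n) → ℝ, Measurable φ →
      MemLp φ ⊤ (volume : Measure (EuclideanSpace ℝ (Fin n))) →
      ∀ t : ℝ, 0 < t →
        eLpNorm (Sop (wMeas n w) Γ φ t) ⊤ (volume : Measure (EuclideanSpace ℝ (Fin n))) ≤
          ENNReal.ofReal cσ * eLpNorm φ ⊤ (volume : Measure (EuclideanSpace ℝ (Fin n)))) :
    ∀ u₀ : EuclideanSpace ℝ (Fin n) → ℝ, Measurable u₀ → (∀ x, 0 ≤ u₀ x) →
      MemLp u₀ ⊤ (volume : Measure (EuclideanSpace ℝ (Fin n))) →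
      ∃ T : ℝ, 0 < T ∧
        ∃ u : EuclideanSpace ℝ (Fin n) → ℝ → ℝ,
          IsSolOn n w Γ p u₀ u (ENNReal.ofReal T) ∧
          (∀ v : EuclideanSpace ℝ (Fin n) → ℝ → ℝ,
            IsSolOn n w Γ p u₀ v (ENNReal.ofReal T) →
            ∀ t : ℝ, 0 < t → t < T →
              (fun x => v x t) =ᵐ[(volume : Measure (EuclideanSpace ℝ (Fin n)))]
                fun x => u x t) ∧
          ∀ t : ℝ, 0 < t → t < T →
            eLpNorm (fun x => u x t) ⊤ (volume : Measure (EuclideanSpace ℝ (Fin n))) ≤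
              ENNReal.ofReal (2 * cσ) *
                eLpNorm u₀ ⊤ (volume : Measure (EuclideanSpace ℝ (Fin n))) :=
  stmt_19_general n hn α w hw p hp Γ hmeas hΓ0 hK1 cσ hS
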